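/- For n ≥ 2 and 1 ≤ j ≤ n−1, c(n,n,j) = 1 if j = 2 and c(n,n,j) = 0 otherwise; when j = 2 the unique permutation counted is (n−1)(n−2)⋯1 n 2. (Here for n = 2, c(2,2,1) = 0.) -/

import Mathlib

open List

/-- `w` is a linear permutation of `[n] = {1,…,n}` written in one-line notation. -/
def IsPermOf (n : ℕ) (w : List ℕ) : Prop :=
  w.Perm ((List.range n).map (· + 1))

/-- occurrence of the vincular pattern 1̄2̄3 : positions a, a+1, c with c > a+1
forming an increasing triple. -/
def Occ123 (w : List ℕ) : Prop :=
  ∃ a c, a + 1 < c ∧ c < w.length ∧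
    w.getD a 0 < w.getD (a + 1) 0 ∧ w.getD (a + 1) 0 < w.getD c 0

/-- occurrence of the vincular pattern 41\overline{23} : positions a < b < c (and c+1)
with w_b < w_c < w_{c+1} < w_a. -/
def Occ4123 (w : List ℕ) : Prop :=
  ∃ a b c, a < b ∧ b < c ∧ c + 1 < w.length ∧
    w.getD b 0 < w.getD c 0 ∧ w.getD c 0 < w.getD (c + 1) 0 ∧
    w.getD (c + 1) 0 < w.getD a 0

/-- occurrence of the vincular pattern 1\overline{23} : positions a < b (and b+1)
forming an increasing triple. -/
def Occ1_23 (w : List ℕ) : Prop :=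
  ∃ a b, a < b ∧ b + 1 < w.length ∧
    w.getD a 0 < w.getD b 0 ∧ w.getD b 0 < w.getD (b + 1) 0

/-- occurrence of the vincular pattern \overline{23}41 : positions a, a+1, c, d with
a+1 < c < d and w_d < w_a < w_{a+1} < w_c. -/
def Occ2341 (w : List ℕ) : Prop :=
  ∃ a c d, a + 1 < c ∧ c < d ∧ d < w.length ∧
    w.getD d 0 < w.getD a 0 ∧ w.getD a 0 < w.getD (a + 1) 0 ∧
    w.getD (a + 1) 0 < w.getD c 0

/-- a circular permutation (represented by any linear reading `w`) avoids
\overline{23}41 iff no cyclic rotation of `w` contains it. -/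
def CircAvoids2341 (w : List ℕ) : Prop := ∀ k, ¬ Occ2341 (w.rotate k)

/-- the set `L_n` of linear permutations of `[n]` avoiding both 1̄2̄3 and 41\overline{23}. -/
def Lset (n : ℕ) : Set (List ℕ) :=
  {w | IsPermOf n w ∧ ¬ Occ123 w ∧ ¬ Occ4123 w}

/-- the permutation (n−1)(n−2)⋯1 n. -/
def excludedPerm (n : ℕ) : List ℕ :=
  ((List.range (n - 1)).map (· + 1)).reverse ++ [n]

/-- `L_n^* = L_n \ {(n−1)(n−2)⋯1n}`. -/
def Lstar (n : ℕ) : Set (List ℕ) := Lset n \ {excludedPerm n}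

/-- `B_n`: members of `L_n^*` in which 1 occurs to the right of n. -/
def Bset (n : ℕ) : Set (List ℕ) :=
  {w ∈ Lstar n | w.idxOf n < w.idxOf 1}

/-- `C_n`: members of `L_n^*` in which 1 occurs to the left of n and 2 to its right. -/
def Cset (n : ℕ) : Set (List ℕ) :=
  {w ∈ Lstar n | w.idxOf 1 < w.idxOf n ∧ w.idxOf n < w.idxOf 2}

/-- members of `B_n` ending in the two letters i, j. -/
def Bnij (n i j : ℕ) : Set (List ℕ) :=
  {w ∈ Bset n | ∃ u, w = u ++ [i, j]}

/-- members of `C_n` ending in the two letters i, j. -/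
def Cnij (n i j : ℕ) : Set (List ℕ) :=
  {w ∈ Cset n | ∃ u, w = u ++ [i, j]}

noncomputable def bcount (n i j : ℕ) : ℕ := (Bnij n i j).ncard
noncomputable def ccount (n i j : ℕ) : ℕ := (Cnij n i j).ncard

/-- `b(n,j)`: the number of members of `B_n` ending in the letter j. -/
noncomputable def bLast (n j : ℕ) : ℕ := Set.ncard {w ∈ Bset n | ∃ u, w = u ++ [j]}

/-- `c(n,j)`: the number of members of `C_n` ending in the letter j. -/
noncomputable def cLast (n j : ℕ) : ℕ := Set.ncard {w ∈ Cset n | ∃ u, w = u ++ [j]}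

/-- `V_n`: linear permutations of `[n]` avoiding both 1̄2̄3 and 1\overline{23}. -/
def Vset (n : ℕ) : Set (List ℕ) :=
  {w | IsPermOf n w ∧ ¬ Occ123 w ∧ ¬ Occ1_23 w}

/-- `v(n,j)`: the number of members of `V_n` ending in the letter j. -/
noncomputable def vcount (n j : ℕ) : ℕ := Set.ncard {w ∈ Vset n | ∃ u, w = u ++ [j]}

/-! If `w = u n j` lies in `C_n`, then `n` is the second-to-last letter and `2` lies to its right,
so `j = 2`. The prefix `u` then has no ascent, since an ascent followed later by the maximum `n`
is an occurrence of 1̄2̄3; hence `u` is `[n-1] ∖ {2}` in decreasing order. Conversely, in that word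
the only ascent ends at the maximum `n`, which rules out both 1̄2̄3 and 41\overline{23}. -/

def descending (k : ℕ) : List ℕ := ((range k).map (· + 1)).reverse

lemma mem_descending {k x : ℕ} : x ∈ descending k ↔ 1 ≤ x ∧ x ≤ k := by
  simp only [descending, mem_reverse, mem_map, mem_range]
  constructor
  · rintro ⟨a, ha, rfl⟩; omega
  · intro h; exact ⟨x - 1, by omega, by omega⟩

lemma pairwise_gt_descending (k : ℕ) : (descending k).Pairwise (· > ·) := by
  rw [descending, pairwise_reverse, pairwise_map]
  exact pairwise_lt_range.imp (by omega)

lemma descending_append_perm {n : ℕ} (hn : 1 ≤ n) :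
    descending (n - 1) ++ [n] ~ (range n).map (· + 1) := by
  obtain ⟨k, rfl⟩ : ∃ k, n = k + 1 := ⟨n - 1, by omega⟩
  rw [range_succ, map_append]
  exact (reverse_perm _).append_right _

lemma getD_le_of_forall_mem_le {w : List ℕ} {m : ℕ} (h : ∀ x ∈ w, x ≤ m) (i : ℕ) :
    w.getD i 0 ≤ m := by
  rcases lt_or_ge i w.length with hi | hi
  · rw [getD_eq_getElem _ _ hi]; exact h _ (getElem_mem hi)
  · rw [getD_eq_default _ _ hi]; exact Nat.zero_le _

lemma getD_succ_eq_of_ascent {t v : List ℕ} {m a : ℕ}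
    (ht : t.Pairwise (· > ·)) (hv : (m :: v).Pairwise (· > ·))
    (ha : a + 1 < (t ++ m :: v).length)
    (hasc : (t ++ m :: v).getD a 0 < (t ++ m :: v).getD (a + 1) 0) :
    (t ++ m :: v).getD (a + 1) 0 = m := by
  rw [length_append] at ha
  rcases lt_trichotomy (a + 1) t.length with hlt | heq | hgt
  · rw [getD_append _ _ _ _ (by omega), getD_append _ _ _ _ hlt, getD_eq_getElem _ _ (by omega),
      getD_eq_getElem _ _ hlt] at hasc
    exact absurd (pairwise_iff_getElem.1 ht a (a + 1) _ _ (by omega)) hasc.not_gt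
  · rw [getD_append_right _ _ _ _ heq.ge, heq, Nat.sub_self]; rfl
  · rw [getD_append_right _ _ _ _ (by omega), getD_append_right _ _ _ _ (by omega),
      show a + 1 - t.length = a - t.length + 1 by omega, getD_eq_getElem _ _ (by omega),
      getD_eq_getElem _ _ (by omega)] at hasc
    exact absurd (pairwise_iff_getElem.1 hv (a - t.length) (a - t.length + 1) _ _ (by omega))
      hasc.not_gt

section TwoDescendingRuns

variable {t v : List ℕ} {m : ℕ} (ht : t.Pairwise (· > ·)) (hv : (m :: v).Pairwise (· > ·))
  (hmax : ∀ x ∈ t ++ m :: v, x ≤ m)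
include ht hv hmax

lemma not_occ123_of_pairwise_gt : ¬ Occ123 (t ++ m :: v) := by
  rintro ⟨a, c, hac, hc, hasc, hlt⟩
  rw [getD_succ_eq_of_ascent ht hv (by omega) hasc] at hlt
  exact (getD_le_of_forall_mem_le hmax c).not_gt hlt

lemma not_occ4123_of_pairwise_gt : ¬ Occ4123 (t ++ m :: v) := by
  rintro ⟨a, b, c, -, -, hc, -, hasc, hlt⟩
  rw [getD_succ_eq_of_ascent ht hv hc hasc] at hlt
  exact (getD_le_of_forall_mem_le hmax a).not_gt hlt

end TwoDescendingRuns

lemma pairwise_ge_of_not_occ123 {u v : List ℕ} {m : ℕ} (hu : ∀ x ∈ u, x < m)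
    (h : ¬ Occ123 (u ++ m :: v)) : u.Pairwise (· ≥ ·) := by
  rw [← isChain_iff_pairwise, isChain_iff_getElem]
  intro i hi
  by_contra! hasc
  refine h ⟨i, u.length, by omega, by simp, ?_, ?_⟩
  · rwa [getD_append _ _ _ _ (by omega), getD_append _ _ _ _ hi, getD_eq_getElem _ _ (by omega),
      getD_eq_getElem _ _ hi]
  · rw [getD_append _ _ _ _ hi, getD_eq_getElem _ _ hi, getD_append_right _ _ _ _ le_rfl,
      Nat.sub_self]
    exact hu _ (getElem_mem hi)

lemma eq_of_idxOf_lt_idxOf {α : Type*} [BEq α] [LawfulBEq α] {u : List α} {a b c : α}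
    (hnd : (u ++ [a, c]).Nodup) (hb : b ∈ u ++ [a, c])
    (hlt : (u ++ [a, c]).idxOf a < (u ++ [a, c]).idxOf b) : b = c := by
  have ha : a ∉ u := fun h => disjoint_of_nodup_append hnd h (mem_cons_self ..)
  rw [idxOf_append_of_notMem ha, idxOf_cons_self] at hlt
  by_cases hbu : b ∈ u
  · rw [idxOf_append_of_mem hbu] at hlt
    exact absurd (idxOf_lt_length_of_mem hbu) (by omega)
  · rw [idxOf_append_of_notMem hbu] at hlt
    rcases (by simpa [hbu] using hb : b = a ∨ b = c) with rfl | rfl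
    · simp at hlt
    · rfl

section IsPermOf

variable {n : ℕ} {w : List ℕ} (h : IsPermOf n w)
include h

lemma IsPermOf.nodup : w.Nodup :=
  (Perm.nodup_iff h).2 (nodup_range.map fun _ _ => Nat.succ.inj)

lemma IsPermOf.length_eq : w.length = n := by
  simpa using Perm.length_eq h

lemma IsPermOf.mem_iff {x : ℕ} : x ∈ w ↔ 1 ≤ x ∧ x ≤ n := by
  rw [Perm.mem_iff h, ← mem_reverse, ← descending, mem_descending]

end IsPermOf

lemma Cnij_self_eq_empty {n j : ℕ} (hj : j ≠ 2) : Cnij n n j = ∅ := by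
  refine Set.eq_empty_of_forall_notMem ?_
  rintro _ ⟨⟨⟨⟨hperm, -, -⟩, -⟩, -, hn2⟩, u, rfl⟩
  have h2 : 2 ∈ u ++ [n, j] := by
    have := hperm.length_eq
    rw [hperm.mem_iff]; simp only [length_append, length_cons, length_nil] at this; omega
  exact hj (eq_of_idxOf_lt_idxOf hperm.nodup h2 hn2).symm

lemma mem_erase_two_descending {k x : ℕ} :
    x ∈ (descending k).erase 2 ↔ x ≠ 2 ∧ 1 ≤ x ∧ x ≤ k := by
  rw [(pairwise_gt_descending k).nodup.mem_erase_iff, mem_descending]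

lemma pairwise_gt_erase_two_descending (k : ℕ) : ((descending k).erase 2).Pairwise (· > ·) :=
  (pairwise_gt_descending k).sublist (erase_sublist ..)

section EndingInTwo

variable {n : ℕ} (hn : 3 ≤ n)
include hn

lemma isPermOf_erase_two_descending : IsPermOf n ((descending (n - 1)).erase 2 ++ [n, 2]) := by
  have h2 : 2 ∈ descending (n - 1) := mem_descending.2 ⟨by omega, by omega⟩
  calc (descending (n - 1)).erase 2 ++ [n, 2]
      = ((descending (n - 1)).erase 2 ++ [n]) ++ [2] := by simp
    _ ~ 2 :: ((descending (n - 1)).erase 2 ++ [n]) := perm_append_singleton ..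
    _ ~ descending (n - 1) ++ [n] := (perm_cons_erase h2).symm.append_right _
    _ ~ (range n).map (· + 1) := descending_append_perm (by omega)

lemma erase_two_descending_mem_Cnij : (descending (n - 1)).erase 2 ++ [n, 2] ∈ Cnij n n 2 := by
  set t := (descending (n - 1)).erase 2
  have hlt : ∀ x ∈ t, x < n := fun x hx => by have := mem_erase_two_descending.1 hx; omega
  have hmax : ∀ x ∈ t ++ [n, 2], x ≤ n := by
    simp only [mem_append, mem_cons, not_mem_nil, or_false]
    rintro x (hx | rfl | rfl) <;> first | exact (hlt x hx).le | omega
  have hruns : [n, 2].Pairwise (· > ·) := pairwise_pair.2 (by omega)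
  have h1 : 1 ∈ t := mem_erase_two_descending.2 ⟨by omega, le_rfl, by omega⟩
  have hn' : n ∉ t := fun h => (hlt n h).false
  have h2 : 2 ∉ t := fun h => (mem_erase_two_descending.1 h).1 rfl
  refine ⟨⟨⟨⟨isPermOf_erase_two_descending hn,
    not_occ123_of_pairwise_gt (pairwise_gt_erase_two_descending _) hruns hmax,
    not_occ4123_of_pairwise_gt (pairwise_gt_erase_two_descending _) hruns hmax⟩, ?_⟩, ?_, ?_⟩,
    t, rfl⟩
  · intro h
    have : 2 = n := by simpa [excludedPerm] using congrArg getLast? h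
    omega
  · rw [idxOf_append_of_mem h1, idxOf_append_of_notMem hn', idxOf_cons_self]
    exact idxOf_lt_length_of_mem h1
  · rw [idxOf_append_of_notMem hn', idxOf_append_of_notMem h2, idxOf_cons_self,
      idxOf_cons_ne _ (by omega), idxOf_cons_self]
    omega

lemma eq_erase_two_descending_of_mem_Cnij {w : List ℕ} (hw : w ∈ Cnij n n 2) :
    w = (descending (n - 1)).erase 2 ++ [n, 2] := by
  obtain ⟨⟨⟨⟨hperm, h123, -⟩, -⟩, -⟩, u, rfl⟩ := hw
  have hu : u ~ (descending (n - 1)).erase 2 :=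
    perm_append_right_iff _ |>.1 (Perm.trans hperm (isPermOf_erase_two_descending hn).symm)
  have hlt : ∀ x ∈ u, x < n := fun x hx => by
    have := mem_erase_two_descending.1 (hu.mem_iff.1 hx); omega
  rw [hu.eq_of_pairwise (le := (· ≥ ·)) (fun _ _ _ _ => ge_antisymm)
    (pairwise_ge_of_not_occ123 hlt h123) ((pairwise_gt_erase_two_descending _).imp le_of_lt)]

lemma Cnij_self_two : Cnij n n 2 = {(descending (n - 1)).erase 2 ++ [n, 2]} :=
  Set.eq_singleton_iff_unique_mem.2
    ⟨erase_two_descending_mem_Cnij hn, fun _ => eq_erase_two_descending_of_mem_Cnij hn⟩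

end EndingInTwo

theorem stmt5_general (n j : ℕ) (hj : j ≤ n - 1) :
    ccount n n j = (if j = 2 then 1 else 0) ∧
    (3 ≤ n → Cnij n n 2 =
      {(((List.range (n - 1)).map (· + 1)).reverse).erase 2 ++ [n, 2]}) := by
  refine ⟨?_, Cnij_self_two⟩
  unfold ccount
  split_ifs with hj2
  · rw [hj2, Cnij_self_two (by omega), Set.ncard_singleton]
  · rw [Cnij_self_eq_empty hj2, Set.ncard_empty]

theorem stmt5 (n j : ℕ) (hn : 2 ≤ n) (hj1 : 1 ≤ j) (hj : j ≤ n - 1) :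
    ccount n n j = (if j = 2 then 1 else 0) ∧
    (3 ≤ n → Cnij n n 2 =
      {(((List.range (n - 1)).map (· + 1)).reverse).erase 2 ++ [n, 2]}) :=
  stmt5_general n j hj
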